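/- For all real numbers x ≥ 0 and y ≥ 0, the series ∑_{n=0}^{∞} (y^{n+1/2} e^{−y} / Γ(n+3/2)) x^{n+1} converges and equals √x · e^{−y} · e^{xy} · erf(√(xy)). -/

import Mathlib

/-- The error function `erf(x) = (2/√π) ∫_0^x e^(-t²) dt`. -/
noncomputable def erf (x : ℝ) : ℝ :=
  (2 / Real.sqrt Real.pi) * ∫ t in (0 : ℝ)..x, Real.exp (-t ^ 2)

/-!
Expanding `exp (z² - t²)` in powers of `z² - t²` and integrating termwise over `[0, z]` gives
`exp (z²) · (√π / 2) · erf z = ∑ₙ (1 / n!) ∫₀ᶻ (z² - t²)ⁿ dt`, and integration by parts turns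
`∫₀ᶻ (z² - t²)ⁿ dt` into `n! √π z^(2n+1) / (2 Γ(n + 3/2))`. Taking `z = √(xy)` and multiplying
by `√x e^(-y)` gives the series of the theorem term by term.
-/

open Real Nat

lemma integral_sq_sub_sq_pow_succ (z : ℝ) (n : ℕ) :
    (2 * n + 3) * ∫ t in (0 : ℝ)..z, (z ^ 2 - t ^ 2) ^ (n + 1)
      = 2 * (n + 1) * z ^ 2 * ∫ t in (0 : ℝ)..z, (z ^ 2 - t ^ 2) ^ n := by
  have hderiv : ∀ t ∈ Set.uIcc (0 : ℝ) z,
      HasDerivAt (fun t : ℝ => t * (z ^ 2 - t ^ 2) ^ (n + 1))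
        ((2 * n + 3) * (z ^ 2 - t ^ 2) ^ (n + 1)
          - 2 * (n + 1) * z ^ 2 * (z ^ 2 - t ^ 2) ^ n) t := by
    intro t _
    have h : HasDerivAt (fun t : ℝ => t * (z ^ 2 - t ^ 2) ^ (n + 1)) _ t :=
      (hasDerivAt_id t).mul (((hasDerivAt_pow 2 t).const_sub (z ^ 2)).pow (n + 1))
    convert h using 1
    simp only [id_eq, Nat.add_sub_cancel]
    push_cast
    ring
  have hFTC := intervalIntegral.integral_eq_sub_of_hasDerivAt hderiv
    (Continuous.intervalIntegrable (by fun_prop) _ _)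
  rw [intervalIntegral.integral_sub (Continuous.intervalIntegrable (by fun_prop) _ _)
      (Continuous.intervalIntegrable (by fun_prop) _ _),
    intervalIntegral.integral_const_mul, intervalIntegral.integral_const_mul] at hFTC
  simp only [sub_self, zero_pow n.succ_ne_zero, mul_zero, zero_mul] at hFTC
  linarith

lemma integral_sq_sub_sq_pow (z : ℝ) (n : ℕ) :
    ∫ t in (0 : ℝ)..z, (z ^ 2 - t ^ 2) ^ n
      = n ! * √π / (2 * Gamma (n + 3 / 2)) * z ^ (2 * n + 1) := by
  induction n with
  | zero =>
    have hGamma : Gamma (3 / 2) = √π / 2 := by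
      rw [show (3 / 2 : ℝ) = 1 / 2 + 1 by norm_num, Gamma_add_one (by norm_num),
        Gamma_one_half_eq]
      ring
    have : √π ≠ 0 := by positivity
    simp only [pow_zero, intervalIntegral.integral_const, sub_zero, smul_eq_mul, mul_one,
      factorial_zero, cast_one, CharP.cast_eq_zero, zero_add, hGamma, mul_zero, pow_one]
    field_simp
  | succ n ih =>
    have hGamma : Gamma ((n + 1 : ℕ) + 3 / 2) = (n + 3 / 2) * Gamma (n + 3 / 2) := by
      rw [Nat.cast_succ, add_right_comm, Gamma_add_one (by positivity)]
    have hrec := integral_sq_sub_sq_pow_succ z n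
    rw [ih] at hrec
    have : Gamma (n + 3 / 2) ≠ 0 := (Gamma_pos_of_pos (by positivity)).ne'
    have : (2 * n + 3 : ℝ) ≠ 0 := by positivity
    rw [hGamma, factorial_succ]
    field_simp at hrec ⊢
    push_cast
    linear_combination hrec

lemma hasSum_integral_sq_sub_sq_pow_div_factorial (z : ℝ) :
    HasSum (fun n : ℕ => ∫ t in (0 : ℝ)..z, (z ^ 2 - t ^ 2) ^ n / n !)
      (∫ t in (0 : ℝ)..z, exp (z ^ 2 - t ^ 2)) := by
  refine intervalIntegral.hasSum_integral_of_dominated_convergence (fun n _ => (z ^ 2) ^ n / n !)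
    (fun n => (Continuous.aestronglyMeasurable (by fun_prop))) (fun n => ?_)
    (.of_forall fun _ _ => summable_pow_div_factorial _) intervalIntegrable_const
    (.of_forall fun t _ => exp_eq_exp_ℝ ▸ NormedSpace.expSeries_div_hasSum_exp (z ^ 2 - t ^ 2))
  refine .of_forall fun t ht => ?_
  have ht2 : t ^ 2 ≤ z ^ 2 := by
    rcases Set.mem_uIcc.mp (Set.uIoc_subset_uIcc ht) with h | h <;> nlinarith
  rw [Real.norm_of_nonneg (by have := sub_nonneg.mpr ht2; positivity)]
  gcongr
  linarith [sq_nonneg t]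

lemma hasSum_exp_sq_mul_erf (z : ℝ) :
    HasSum (fun n : ℕ => z ^ (2 * n + 1) / Gamma (n + 3 / 2)) (exp (z ^ 2) * erf z) := by
  have hπ : √π ≠ 0 := by positivity
  have hterm (n : ℕ) : ∫ t in (0 : ℝ)..z, (z ^ 2 - t ^ 2) ^ n / n !
      = √π / 2 * (z ^ (2 * n + 1) / Gamma (n + 3 / 2)) := by
    have : Gamma (n + 3 / 2) ≠ 0 := (Gamma_pos_of_pos (by positivity)).ne'
    rw [intervalIntegral.integral_div, integral_sq_sub_sq_pow]
    field_simp
  have hsum : ∫ t in (0 : ℝ)..z, exp (z ^ 2 - t ^ 2) = √π / 2 * (exp (z ^ 2) * erf z) := by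
    simp_rw [sub_eq_add_neg, exp_add, intervalIntegral.integral_const_mul, erf]
    field_simp
  have h := hasSum_integral_sq_sub_sq_pow_div_factorial z
  simp only [hterm, hsum] at h
  exact (hasSum_mul_left_iff (by positivity)).mp h

lemma rpow_natCast_add_half {y : ℝ} (hy : 0 ≤ y) (n : ℕ) :
    y ^ ((n : ℝ) + 1 / 2) = √y ^ (2 * n + 1) := by
  rw [rpow_add' hy (by positivity), rpow_natCast, ← sqrt_eq_rpow, pow_succ, pow_mul, sq_sqrt hy]

theorem sum_b_n (x y : ℝ) (hx : 0 ≤ x) (hy : 0 ≤ y) :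
    HasSum (fun n : ℕ =>
        y ^ ((n : ℝ) + 1 / 2) * Real.exp (-y) / Real.Gamma (n + 3 / 2) * x ^ (n + 1))
      (Real.sqrt x * Real.exp (-y) * Real.exp (x * y) * erf (Real.sqrt (x * y))) := by
  have h := (hasSum_exp_sq_mul_erf √(x * y)).mul_left (√x * exp (-y))
  rw [sq_sqrt (mul_nonneg hx hy), ← mul_assoc] at h
  refine h.congr_fun fun n => ?_
  rw [rpow_natCast_add_half hy, sqrt_mul hx, mul_pow,
    show x ^ (n + 1) = (√x ^ 2) ^ (n + 1) by rw [sq_sqrt hx]]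
  ring
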